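/- Duhamel's principle: Let E be a complex Banach space, let B, L : E → E be continuous linear maps, let f : ℝ → E be continuous, and let u₀, u₁ ∈ E. Suppose w : ℝ → E is twice continuously differentiable with w''(t) + B(w'(t)) + L(w(t)) = 0 for all t ≥ 0, w(0) = u₀ and w'(0) = u₁. Suppose v : ℝ → ℝ → E is such that for every τ ≥ 0 the map t ↦ v τ t is twice continuously differentiable on [τ,∞) and satisfies ∂_t² v τ t + B(∂_t v τ t) + L(v τ t) = 0 for all t ≥ τ, together with v τ τ = 0 and ∂_t v τ τ = f(τ); assume moreover that (τ,t) ↦ v τ t, (τ,t) ↦ ∂_t v τ t and (τ,t) ↦ ∂_t² v τ t are continuous on the set {(τ,t) : 0 ≤ τ ≤ t}. Then the function u(t) := w(t) + ∫₀ᵗ v τ t dτ is twice differentiable on [0,∞), satisfies u''(t) + B(u'(t)) + L(u(t)) = f(t) for every t ≥ 0, and u(0) = u₀, u'(0) = u₁. -/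

import Mathlib

open MeasureTheory Filter Topology intervalIntegral

lemma tri_intervalIntegrable {E : Type*} [NormedAddCommGroup E]
    (G : ℝ → ℝ → E)
    (hGc : ContinuousOn (fun p : ℝ × ℝ => G p.1 p.2) {p : ℝ × ℝ | 0 ≤ p.1 ∧ p.1 ≤ p.2})
    (a b s : ℝ) (ha : 0 ≤ a) (hb : 0 ≤ b) (has : a ≤ s) (hbs : b ≤ s) :
    IntervalIntegrable (fun τ => G τ s) MeasureTheory.volume a b := by
  apply ContinuousOn.intervalIntegrable
  have hc : ContinuousOn (fun τ : ℝ => ((τ, s) : ℝ × ℝ)) (Set.uIcc a b) :=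
    (continuous_id.prodMk continuous_const).continuousOn
  have := hGc.comp hc ?_
  · exact this
  · intro τ hτ
    rw [Set.mem_uIcc] at hτ
    rcases hτ with ⟨h1, h2⟩ | ⟨h1, h2⟩ <;> exact ⟨by linarith, by linarith⟩

lemma duhamel_key {E : Type*} [NormedAddCommGroup E] [NormedSpace ℝ E] [CompleteSpace E]
    (g g₁ : ℝ → ℝ → E)
    (hder : ∀ τ : ℝ, 0 ≤ τ → ∀ t : ℝ, τ ≤ t → HasDerivWithinAt (g τ) (g₁ τ t) (Set.Ici τ) t)
    (hgc : ContinuousOn (fun p : ℝ × ℝ => g p.1 p.2) {p : ℝ × ℝ | 0 ≤ p.1 ∧ p.1 ≤ p.2})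
    (hg1c : ContinuousOn (fun p : ℝ × ℝ => g₁ p.1 p.2) {p : ℝ × ℝ | 0 ≤ p.1 ∧ p.1 ≤ p.2})
    (t : ℝ) (ht : 0 ≤ t) :
    HasDerivWithinAt (fun t' => ∫ τ in (0:ℝ)..t', g τ t')
      (g t t + ∫ τ in (0:ℝ)..t, g₁ τ t) (Set.Ici 0) t := by
  -- integrability of s-sections of g₁ in the second variable
  have hg1sec : ∀ τ a b : ℝ, 0 ≤ τ → τ ≤ a → τ ≤ b →
      IntervalIntegrable (fun s => g₁ τ s) MeasureTheory.volume a b := by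
    intro τ a b hτ hτa hτb
    apply ContinuousOn.intervalIntegrable
    have hc : ContinuousOn (fun s : ℝ => ((τ, s) : ℝ × ℝ)) (Set.uIcc a b) :=
      (continuous_const.prodMk continuous_id).continuousOn
    refine hg1c.comp hc ?_
    intro s hs
    rw [Set.mem_uIcc] at hs
    rcases hs with ⟨h1, h2⟩ | ⟨h1, h2⟩ <;> exact ⟨hτ, by linarith⟩
  -- FTC for each section
  have hFTC : ∀ τ a b : ℝ, 0 ≤ τ → τ ≤ a → a ≤ b →
      g τ b - g τ a = ∫ s in a..b, g₁ τ s := by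
    intro τ a b hτ hτa hab
    refine (intervalIntegral.integral_eq_sub_of_hasDeriv_right_of_le hab ?_ ?_ ?_).symm
    · intro s hs
      exact ((hder τ hτ s (le_trans hτa hs.1)).continuousWithinAt).mono
        (fun y hy => le_trans hτa hy.1)
    · intro s hs
      exact (hder τ hτ s (le_trans hτa hs.1.le)).mono
        (fun y hy => le_trans (le_trans hτa hs.1.le) hy.le)
    · exact hg1sec τ a b hτ hτa (le_trans hτa hab)
  -- compact triangle
  set K : Set (ℝ × ℝ) := {p | 0 ≤ p.1 ∧ p.1 ≤ p.2 ∧ p.2 ≤ t + 1} with hKdef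
  have hKT : K ⊆ {p : ℝ × ℝ | 0 ≤ p.1 ∧ p.1 ≤ p.2} := fun p hp => ⟨hp.1, hp.2.1⟩
  have hKc : IsCompact K := by
    have hsub : K ⊆ Set.Icc 0 (t+1) ×ˢ Set.Icc 0 (t+1) := fun p hp =>
      ⟨⟨hp.1, le_trans hp.2.1 hp.2.2⟩, ⟨le_trans hp.1 hp.2.1, hp.2.2⟩⟩
    have hcl : IsClosed K := by
      have : K = {p : ℝ × ℝ | 0 ≤ p.1} ∩ ({p : ℝ × ℝ | p.1 ≤ p.2} ∩ {p : ℝ × ℝ | p.2 ≤ t+1}) := by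
        ext p; simp [hKdef, Set.mem_setOf_eq, and_assoc]
      rw [this]
      exact (isClosed_le continuous_const continuous_fst).inter
        ((isClosed_le continuous_fst continuous_snd).inter
          (isClosed_le continuous_snd continuous_const))
    exact IsCompact.of_isClosed_subset (isCompact_Icc.prod isCompact_Icc) hcl hsub
  have hUC := Metric.uniformContinuousOn_iff.mp
    (hKc.uniformContinuousOn_of_continuous (hg1c.mono hKT))
  obtain ⟨M, hM⟩ := hKc.exists_bound_of_continuousOn (hg1c.mono hKT)
  set M' : ℝ := max M 1 with hM'def
  have hM'pos : 0 < M' := lt_of_lt_of_le one_pos (le_max_right _ _)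
  have hM' : ∀ p ∈ K, ‖g₁ p.1 p.2‖ ≤ M' := fun p hp => le_trans (hM p hp) (le_max_left _ _)
  rw [hasDerivWithinAt_iff_isLittleO, Asymptotics.isLittleO_iff]
  intro c hc
  set ε : ℝ := c / (t + 2) with hεdef
  have htpos : (0:ℝ) < t + 2 := by linarith
  have hε : 0 < ε := div_pos hc htpos
  have hεc : ε * (t + 2) = c := div_mul_cancel₀ c (ne_of_gt htpos)
  obtain ⟨δ₁, hδ₁, hδ₁p⟩ := hUC ε hε
  have hctw := Metric.continuousWithinAt_iff.mp (hgc (t, t) ⟨ht, le_refl t⟩)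
  obtain ⟨δ₂, hδ₂, hδ₂p⟩ := hctw ε hε
  set δ : ℝ := min (min δ₁ δ₂) (min 1 (ε / M')) with hδdef
  have hδpos : 0 < δ := by
    apply lt_min (lt_min hδ₁ hδ₂) (lt_min one_pos (div_pos hε hM'pos))
  filter_upwards [self_mem_nhdsWithin,
    mem_nhdsWithin_of_mem_nhds (Metric.ball_mem_nhds t hδpos)] with t' ht' hball
  have hd : |t' - t| < δ := by rwa [Metric.mem_ball, Real.dist_eq] at hball
  have hd1 : |t' - t| < δ₁ := lt_of_lt_of_le hd (le_trans (min_le_left _ _) (min_le_left _ _))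
  have hd2 : |t' - t| < δ₂ := lt_of_lt_of_le hd (le_trans (min_le_left _ _) (min_le_right _ _))
  have hd3 : |t' - t| < 1 := lt_of_lt_of_le hd (le_trans (min_le_right _ _) (min_le_left _ _))
  have hd4 : |t' - t| < ε / M' := lt_of_lt_of_le hd (le_trans (min_le_right _ _) (min_le_right _ _))
  have ht'0 : (0:ℝ) ≤ t' := ht'
  have habs := abs_lt.mp hd3
  -- pointwise increment estimate via FTC
  have hincr : ∀ τ a b : ℝ, 0 ≤ τ → τ ≤ a → a ≤ b → τ ≤ t → b ≤ t + 1 →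
      |a - t| < δ₁ → |b - t| < δ₁ →
      ‖g τ b - g τ a - (b - a) • g₁ τ t‖ ≤ ε * (b - a) := by
    intro τ a b hτ hτa hab hτt hb1 hat hbt
    rw [hFTC τ a b hτ hτa hab,
      show (b - a) • g₁ τ t = ∫ _ in a..b, g₁ τ t from (intervalIntegral.integral_const _).symm,
      ← intervalIntegral.integral_sub (hg1sec τ a b hτ hτa (le_trans hτa hab))
        intervalIntegrable_const]
    have := intervalIntegral.norm_integral_le_of_norm_le_const (C := ε)
      (f := fun s => g₁ τ s - g₁ τ t) (a := a) (b := b) ?_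
    · rwa [abs_of_nonneg (sub_nonneg.2 hab)] at this
    · intro s hs
      rw [Set.uIoc_of_le hab] at hs
      have hsK : ((τ, s) : ℝ × ℝ) ∈ K :=
        ⟨hτ, le_trans hτa hs.1.le, le_trans hs.2 hb1⟩
      have htK : ((τ, t) : ℝ × ℝ) ∈ K := ⟨hτ, hτt, by linarith⟩
      have hdist : dist ((τ, s) : ℝ × ℝ) ((τ, t) : ℝ × ℝ) < δ₁ := by
        rw [Prod.dist_eq, Real.dist_eq, Real.dist_eq, sub_self, abs_zero]
        have h1 := abs_lt.mp hat
        have h2 := abs_lt.mp hbt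
        have : |s - t| < δ₁ := by
          rw [abs_lt]
          constructor <;> [linarith [hs.1]; linarith [hs.2]]
        simpa [max_le_iff] using lt_of_le_of_lt (le_max_right 0 |s - t|) (by simpa using this)
      have := hδ₁p _ hsK _ htK hdist
      rw [dist_eq_norm] at this
      exact this.le
  rcases le_total t t' with hcase | hcase
  · -- t ≤ t'
    have ht'le : t' ≤ t + 1 := by linarith [habs.2]
    have I1 := tri_intervalIntegrable g hgc 0 t t' le_rfl ht (by linarith) hcase
    have I2 := tri_intervalIntegrable g hgc t t' t' ht ht'0 hcase le_rfl
    have I3 := tri_intervalIntegrable g hgc 0 t t le_rfl ht ht le_rfl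
    have I4 := tri_intervalIntegrable g₁ hg1c 0 t t le_rfl ht ht le_rfl
    have hid : (∫ τ in (0:ℝ)..t', g τ t') - (∫ τ in (0:ℝ)..t, g τ t)
        - (t' - t) • (g t t + ∫ τ in (0:ℝ)..t, g₁ τ t)
        = (∫ τ in t..t', (g τ t' - g t t))
          + ∫ τ in (0:ℝ)..t, (g τ t' - g τ t - (t' - t) • g₁ τ t) := by
      have I5 : IntervalIntegrable (fun τ => (t' - t) • g₁ τ t) MeasureTheory.volume 0 t :=
        I4.smul (t' - t)
      rw [intervalIntegral.integral_sub I2 intervalIntegrable_const,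
        intervalIntegral.integral_sub (I1.sub I3) I5,
        intervalIntegral.integral_sub I1 I3,
        intervalIntegral.integral_const, intervalIntegral.integral_smul,
        ← intervalIntegral.integral_add_adjacent_intervals I1 I2]
      module
    rw [hid]
    have hA : ‖∫ τ in t..t', (g τ t' - g t t)‖ ≤ ε * |t' - t| := by
      apply intervalIntegral.norm_integral_le_of_norm_le_const
      intro τ hτ
      rw [Set.uIoc_of_le hcase] at hτ
      have hmem : ((τ, t') : ℝ × ℝ) ∈ {p : ℝ × ℝ | 0 ≤ p.1 ∧ p.1 ≤ p.2} :=
        ⟨le_trans ht hτ.1.le, hτ.2⟩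
      have hdist : dist ((τ, t') : ℝ × ℝ) ((t, t) : ℝ × ℝ) < δ₂ := by
        rw [Prod.dist_eq, Real.dist_eq, Real.dist_eq]
        have h2 := abs_lt.mp hd2
        have h1 : |τ - t| < δ₂ := by rw [abs_lt]; constructor <;> [linarith [hτ.1]; linarith [hτ.2]]
        simp only [max_lt_iff]
        exact ⟨h1, hd2⟩
      have := hδ₂p hmem hdist
      rw [dist_eq_norm] at this
      exact this.le
    have hB : ‖∫ τ in (0:ℝ)..t, (g τ t' - g τ t - (t' - t) • g₁ τ t)‖ ≤ (ε * |t' - t|) * |t - 0| := by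
      apply intervalIntegral.norm_integral_le_of_norm_le_const
      intro τ hτ
      rw [Set.uIoc_of_le ht] at hτ
      have h := hincr τ t t' hτ.1.le hτ.2 hcase hτ.2 ht'le (by simpa using hδ₁) hd1
      calc ‖g τ t' - g τ t - (t' - t) • g₁ τ t‖ ≤ ε * (t' - t) := h
        _ ≤ ε * |t' - t| := by
            apply mul_le_mul_of_nonneg_left (le_abs_self _) hε.le
    calc ‖(∫ τ in t..t', (g τ t' - g t t))
          + ∫ τ in (0:ℝ)..t, (g τ t' - g τ t - (t' - t) • g₁ τ t)‖
        ≤ ε * |t' - t| + (ε * |t' - t|) * |t - 0| := norm_add_le_of_le hA hB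
      _ ≤ c * ‖t' - t‖ := by
          rw [Real.norm_eq_abs, sub_zero, abs_of_nonneg ht]
          nlinarith [abs_nonneg (t' - t), hε.le]
  · -- t' ≤ t
    have J1 := tri_intervalIntegrable g hgc 0 t' t' le_rfl ht'0 ht'0 le_rfl
    have J2 := tri_intervalIntegrable g hgc 0 t' t le_rfl ht'0 ht hcase
    have J2' := tri_intervalIntegrable g hgc t' t t ht'0 ht hcase le_rfl
    have J3 := tri_intervalIntegrable g₁ hg1c 0 t' t le_rfl ht'0 ht hcase
    have J3' := tri_intervalIntegrable g₁ hg1c t' t t ht'0 ht hcase le_rfl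
    have hid : (∫ τ in (0:ℝ)..t', g τ t') - (∫ τ in (0:ℝ)..t, g τ t)
        - (t' - t) • (g t t + ∫ τ in (0:ℝ)..t, g₁ τ t)
        = (∫ τ in (0:ℝ)..t', (g τ t' - g τ t - (t' - t) • g₁ τ t))
          - (∫ τ in t'..t, (g τ t - g t t))
          - (t' - t) • ∫ τ in t'..t, g₁ τ t := by
      have J5 : IntervalIntegrable (fun τ => (t' - t) • g₁ τ t) MeasureTheory.volume 0 t' :=
        J3.smul (t' - t)
      rw [intervalIntegral.integral_sub (J1.sub J2) J5,
        intervalIntegral.integral_sub J1 J2,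
        intervalIntegral.integral_sub J2' intervalIntegrable_const,
        intervalIntegral.integral_const, intervalIntegral.integral_smul,
        ← intervalIntegral.integral_add_adjacent_intervals J2 J2',
        ← intervalIntegral.integral_add_adjacent_intervals J3 J3']
      module
    rw [hid]
    have hA : ‖∫ τ in t'..t, (g τ t - g t t)‖ ≤ ε * |t - t'| := by
      apply intervalIntegral.norm_integral_le_of_norm_le_const
      intro τ hτ
      rw [Set.uIoc_of_le hcase] at hτ
      have hmem : ((τ, t) : ℝ × ℝ) ∈ {p : ℝ × ℝ | 0 ≤ p.1 ∧ p.1 ≤ p.2} :=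
        ⟨le_trans ht'0 hτ.1.le, hτ.2⟩
      have h2 := abs_lt.mp hd2
      have hdist : dist ((τ, t) : ℝ × ℝ) ((t, t) : ℝ × ℝ) < δ₂ := by
        rw [Prod.dist_eq, Real.dist_eq, Real.dist_eq, sub_self, abs_zero]
        have h1 : |τ - t| < δ₂ := by
          rw [abs_lt]; constructor <;> [linarith [hτ.1]; linarith [hτ.2]]
        simp only [max_lt_iff]
        exact ⟨h1, hδ₂⟩
      have := hδ₂p hmem hdist
      rw [dist_eq_norm] at this
      exact this.le
    have hB : ‖∫ τ in (0:ℝ)..t', (g τ t' - g τ t - (t' - t) • g₁ τ t)‖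
        ≤ (ε * |t - t'|) * |t' - 0| := by
      apply intervalIntegral.norm_integral_le_of_norm_le_const
      intro τ hτ
      rw [Set.uIoc_of_le ht'0] at hτ
      have h := hincr τ t' t hτ.1.le hτ.2 hcase (le_trans hτ.2 hcase) (by linarith)
        hd1 (by simpa using hδ₁)
      have heq : g τ t' - g τ t - (t' - t) • g₁ τ t
          = -(g τ t - g τ t' - (t - t') • g₁ τ t) := by module
      rw [heq, norm_neg]
      calc ‖g τ t - g τ t' - (t - t') • g₁ τ t‖ ≤ ε * (t - t') := h
        _ ≤ ε * |t - t'| := mul_le_mul_of_nonneg_left (le_abs_self _) hε.le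
    have hC : ‖(t' - t) • ∫ τ in t'..t, g₁ τ t‖ ≤ |t' - t| * (M' * |t - t'|) := by
      rw [norm_smul, Real.norm_eq_abs]
      apply mul_le_mul_of_nonneg_left _ (abs_nonneg _)
      apply intervalIntegral.norm_integral_le_of_norm_le_const
      intro τ hτ
      rw [Set.uIoc_of_le hcase] at hτ
      exact hM' (τ, t) ⟨le_trans ht'0 hτ.1.le, hτ.2, by linarith⟩
    calc ‖(∫ τ in (0:ℝ)..t', (g τ t' - g τ t - (t' - t) • g₁ τ t))
          - (∫ τ in t'..t, (g τ t - g t t))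
          - (t' - t) • ∫ τ in t'..t, g₁ τ t‖
        ≤ ‖(∫ τ in (0:ℝ)..t', (g τ t' - g τ t - (t' - t) • g₁ τ t))
            - (∫ τ in t'..t, (g τ t - g t t))‖ + ‖(t' - t) • ∫ τ in t'..t, g₁ τ t‖ :=
          norm_sub_le _ _
      _ ≤ ((ε * |t - t'|) * |t' - 0| + ε * |t - t'|) + |t' - t| * (M' * |t - t'|) := by
          exact add_le_add (le_trans (norm_sub_le _ _) (add_le_add hB hA)) hC
      _ ≤ c * ‖t' - t‖ := by
          rw [Real.norm_eq_abs, sub_zero, abs_of_nonneg ht'0,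
            abs_sub_comm t t']
          have hMd : M' * |t' - t| ≤ ε := by
            rw [← le_div_iff₀' hM'pos]
            exact hd4.le
          have ht'le_t : |t' - t| * t' ≤ |t' - t| * t :=
            mul_le_mul_of_nonneg_left hcase (abs_nonneg _)
          nlinarith [abs_nonneg (t' - t), hε.le, mul_le_mul_of_nonneg_left hMd (abs_nonneg (t' - t))]

/-- Duhamel's principle: Let `E` be a complex Banach space, `B, L : E → E`
continuous linear maps, `f : ℝ → E` continuous, `u₀, u₁ ∈ E`. Suppose `w : ℝ → E` is twice
continuously differentiable with `w'' + B w' + L w = 0` on `[0,∞)`, `w 0 = u₀`, `w' 0 = u₁`.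
Suppose `v : ℝ → ℝ → E` is such that for every `τ ≥ 0` the map `t ↦ v τ t` is twice
continuously differentiable on `[τ,∞)` (with first and second derivatives `v₁ τ` and `v₂ τ`)
and satisfies `∂ₜ² v τ t + B (∂ₜ v τ t) + L (v τ t) = 0` for `t ≥ τ`, with `v τ τ = 0` and
`∂ₜ v τ τ = f τ`; assume moreover that `(τ,t) ↦ v τ t`, `(τ,t) ↦ ∂ₜ v τ t`,
`(τ,t) ↦ ∂ₜ² v τ t` are continuous on `{(τ,t) : 0 ≤ τ ≤ t}`. Then
`u t := w t + ∫ τ in 0..t, v τ t` is twice differentiable on `[0,∞)`, satisfies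
`u'' + B u' + L u = f` on `[0,∞)`, and `u 0 = u₀`, `u' 0 = u₁`. -/
theorem duhamel_principle
    {E : Type*} [NormedAddCommGroup E] [NormedSpace ℂ E] [CompleteSpace E]
    (B L : E →L[ℂ] E) (f : ℝ → E) (hf : Continuous f) (u₀ u₁ : E)
    (w : ℝ → E) (hw : ContDiff ℝ 2 w)
    (hweq : ∀ t : ℝ, 0 ≤ t → deriv (deriv w) t + B (deriv w t) + L (w t) = 0)
    (hw0 : w 0 = u₀) (hw1 : deriv w 0 = u₁)
    (v v₁ v₂ : ℝ → ℝ → E)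
    (hv1 : ∀ τ : ℝ, 0 ≤ τ → ∀ t : ℝ, τ ≤ t →
      HasDerivWithinAt (v τ) (v₁ τ t) (Set.Ici τ) t)
    (hv2 : ∀ τ : ℝ, 0 ≤ τ → ∀ t : ℝ, τ ≤ t →
      HasDerivWithinAt (v₁ τ) (v₂ τ t) (Set.Ici τ) t)
    (hv1cont : ∀ τ : ℝ, 0 ≤ τ → ContinuousOn (v₁ τ) (Set.Ici τ))
    (hv2cont : ∀ τ : ℝ, 0 ≤ τ → ContinuousOn (v₂ τ) (Set.Ici τ))
    (hveq : ∀ τ : ℝ, 0 ≤ τ → ∀ t : ℝ, τ ≤ t →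
      v₂ τ t + B (v₁ τ t) + L (v τ t) = 0)
    (hv0 : ∀ τ : ℝ, 0 ≤ τ → v τ τ = 0)
    (hv0' : ∀ τ : ℝ, 0 ≤ τ → v₁ τ τ = f τ)
    (hvcont2 : ContinuousOn (fun p : ℝ × ℝ => v p.1 p.2) {p : ℝ × ℝ | 0 ≤ p.1 ∧ p.1 ≤ p.2})
    (hv1cont2 : ContinuousOn (fun p : ℝ × ℝ => v₁ p.1 p.2) {p : ℝ × ℝ | 0 ≤ p.1 ∧ p.1 ≤ p.2})
    (hv2cont2 : ContinuousOn (fun p : ℝ × ℝ => v₂ p.1 p.2) {p : ℝ × ℝ | 0 ≤ p.1 ∧ p.1 ≤ p.2}) :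
    ∃ du ddu : ℝ → E,
      (∀ t : ℝ, 0 ≤ t →
        HasDerivWithinAt (fun t' => w t' + ∫ τ in (0:ℝ)..t', v τ t') (du t) (Set.Ici 0) t) ∧
      (∀ t : ℝ, 0 ≤ t → HasDerivWithinAt du (ddu t) (Set.Ici 0) t) ∧
      (∀ t : ℝ, 0 ≤ t →
        ddu t + B (du t) + L (w t + ∫ τ in (0:ℝ)..t, v τ t) = f t) ∧
      (w 0 + ∫ τ in (0:ℝ)..(0:ℝ), v τ 0) = u₀ ∧ du 0 = u₁ := by
  have hw1d : Differentiable ℝ w := hw.differentiable (by norm_num)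
  have hwd2 : ContDiff ℝ 1 (deriv w) := by
    have h2 : ContDiff ℝ ((1:WithTop ℕ∞) + 1) w := by exact_mod_cast hw
    exact (contDiff_succ_iff_deriv.mp h2).2.2
  have hw2d : Differentiable ℝ (deriv w) := hwd2.differentiable (by norm_num)
  refine ⟨fun s => deriv w s + ∫ τ in (0:ℝ)..s, v₁ τ s,
    fun s => deriv (deriv w) s + (f s + ∫ τ in (0:ℝ)..s, v₂ τ s), ?_, ?_, ?_, ?_, ?_⟩
  · intro t ht
    have h1 := duhamel_key v v₁ hv1 hvcont2 hv1cont2 t ht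
    rw [hv0 t ht, zero_add] at h1
    exact ((hw1d t).hasDerivAt.hasDerivWithinAt).add h1
  · intro t ht
    have h2 := duhamel_key v₁ v₂ hv2 hv1cont2 hv2cont2 t ht
    rw [hv0' t ht] at h2
    exact ((hw2d t).hasDerivAt.hasDerivWithinAt).add h2
  · intro t ht
    have Iv := tri_intervalIntegrable v hvcont2 0 t t le_rfl ht ht le_rfl
    have Iv1 := tri_intervalIntegrable v₁ hv1cont2 0 t t le_rfl ht ht le_rfl
    have Iv2 := tri_intervalIntegrable v₂ hv2cont2 0 t t le_rfl ht ht le_rfl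
    have hBint := tri_intervalIntegrable (fun τ s => B (v₁ τ s))
      (B.continuous.comp_continuousOn hv1cont2) 0 t t le_rfl ht ht le_rfl
    have hLint := tri_intervalIntegrable (fun τ s => L (v τ s))
      (L.continuous.comp_continuousOn hvcont2) 0 t t le_rfl ht ht le_rfl
    have hzyw : (∫ τ in (0:ℝ)..t, v₂ τ t) + B (∫ τ in (0:ℝ)..t, v₁ τ t)
        + L (∫ τ in (0:ℝ)..t, v τ t) = 0 := by
      rw [← B.intervalIntegral_comp_comm Iv1, ← L.intervalIntegral_comp_comm Iv,
        ← intervalIntegral.integral_add Iv2 hBint,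
        ← intervalIntegral.integral_add (Iv2.add hBint) hLint]
      have heq : Set.EqOn (fun τ => v₂ τ t + B (v₁ τ t) + L (v τ t))
          (fun _ => (0:E)) (Set.uIcc 0 t) := by
        intro τ hτ
        rw [Set.uIcc_of_le ht, Set.mem_Icc] at hτ
        exact hveq τ hτ.1 t hτ.2
      rw [intervalIntegral.integral_congr heq, intervalIntegral.integral_const, smul_zero]
    have key : deriv (deriv w) t + (f t + ∫ τ in (0:ℝ)..t, v₂ τ t)
        + B (deriv w t + ∫ τ in (0:ℝ)..t, v₁ τ t)
        + L (w t + ∫ τ in (0:ℝ)..t, v τ t)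
        = (deriv (deriv w) t + B (deriv w t) + L (w t))
          + ((∫ τ in (0:ℝ)..t, v₂ τ t) + B (∫ τ in (0:ℝ)..t, v₁ τ t)
            + L (∫ τ in (0:ℝ)..t, v τ t)) + f t := by
      rw [map_add B, map_add L]; abel
    rw [key, hweq t ht, hzyw, zero_add, zero_add]
  · simp [intervalIntegral.integral_same, hw0]
  · simp [intervalIntegral.integral_same, hw1]
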